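/- arXiv:2208.00962 — 4 statements merged into one kernel-verified Lean document; each statement's English description precedes it below -/
import Mathlib

section
/- Let f be an order-preserving homeomorphism of [0,1]. The map x ↦ δ_x is a bijective isometry from the fixed-point set Fix(f) = {x ∈ [0,1] : f(x) = x}, equipped with the Euclidean metric, onto the set M_f^erg([0,1]) of f-invariant ergodic Borel probability measures equipped with the Lévy–Prokhorov metric LP. -/
open MeasureTheory Filter Metric Set Topology

noncomputable section

/-- The set of `f`-invariant ergodic Borel probability measures, viewed inside the
Lévy–Prokhorov metric space of probability measures. -/
def ergodicMeasures {X : Type*} [MetricSpace X] [MeasurableSpace X] (f : X → X) :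
    Set (LevyProkhorov (ProbabilityMeasure X)) :=
  {μ | Ergodic f ((LevyProkhorov.toMeasureEquiv (α := ProbabilityMeasure X) μ : ProbabilityMeasure X) : Measure X)}

/-!
For strictly increasing `f` the sets `{x | x < f x}` and `{x | f x < x}` are `f`-invariant, so an
ergodic `μ` gives each of them measure `0` or full measure. In the latter case `x ≤ f x` (say)
holds a.e. while `f` preserves `∫ x dμ`, which forces `f x = x` a.e. Once `f = id` a.e., the
identity map is an a.e.-invariant function, hence a.e. constant by ergodicity: `μ` is a Dirac
mass at a fixed point. The Lévy–Prokhorov distance between `δ_x` and `δ_y` is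
`min (dist x y) 1`, which is `dist x y` on `[0,1]`.
-/

open Function ENNReal

section LevyProkhorovDirac

variable {Ω : Type*} [MeasurableSpace Ω]

lemma levyProkhorovEDist_dirac [PseudoEMetricSpace Ω] [OpensMeasurableSpace Ω] (x y : Ω) :
    levyProkhorovEDist (Measure.dirac x) (Measure.dirac y) = min (edist x y) 1 := by
  refine le_antisymm (le_min ?_ ?_) (le_of_forall_lt_imp_le_of_dense fun c hc => ?_)
  · refine levyProkhorovEDist_le_of_forall _ _ _ fun ε B hε hε_top hB => ?_
    have dirac_le {a b : Ω} (hab : edist a b < ε) :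
        Measure.dirac a B ≤ Measure.dirac b (thickening ε.toReal B) + ε := by
      by_cases ha : a ∈ B
      · have hb : b ∈ thickening ε.toReal B := by
          rw [mem_thickening_iff_infEDist_lt, ofReal_toReal hε_top.ne]
          exact (infEDist_le_edist_of_mem ha).trans_lt (edist_comm a b ▸ hab)
        calc Measure.dirac a B ≤ 1 := prob_le_one
          _ = Measure.dirac b (thickening ε.toReal B) := (Measure.dirac_apply_of_mem hb).symm
          _ ≤ _ := le_self_add
      · simp [(dirac_eq_zero_iff_not_mem hB).2 ha]
    exact ⟨dirac_le hε, dirac_le (edist_comm x y ▸ hε)⟩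
  · simpa using levyProkhorovEDist_le_max_measure_univ (Measure.dirac x) (Measure.dirac y)
  · by_contra! h
    have hc1 : c < 1 := hc.trans_le (min_le_right _ _)
    -- `closure {x}` rather than `{x}`: singletons need not be measurable in a pseudo-emetric space
    have hy : y ∉ thickening c.toReal (closure {x}) := by
      rw [thickening_closure, mem_thickening_iff_infEDist_lt, infEDist_singleton,
        ofReal_toReal (hc1.trans one_lt_top).ne, not_lt, edist_comm]
      exact (hc.trans_le (min_le_left _ _)).le
    have := left_measure_le_of_levyProkhorovEDist_lt h (isClosed_closure (s := {x})).measurableSet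
    rw [Measure.dirac_apply_of_mem (subset_closure (mem_singleton x)),
      (dirac_eq_zero_iff_not_mem isOpen_thickening.measurableSet).2 hy, zero_add] at this
    exact (this.trans_lt hc1).false

lemma levyProkhorovDist_dirac [PseudoMetricSpace Ω] [OpensMeasurableSpace Ω] (x y : Ω) :
    levyProkhorovDist (Measure.dirac x) (Measure.dirac y) = min (dist x y) 1 := by
  rw [levyProkhorovDist, levyProkhorovEDist_dirac, toReal_min (edist_ne_top x y) one_ne_top,
    ← dist_edist, toReal_one]

lemma isometry_levyProkhorov_diracProba_of_dist_le_one [PseudoMetricSpace Ω]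
    [OpensMeasurableSpace Ω] (h : ∀ x y : Ω, dist x y ≤ 1) :
    Isometry fun x : Ω => LevyProkhorov.toMeasureEquiv.symm (diracProba x) :=
  Isometry.of_dist_eq fun x y => (levyProkhorovDist_dirac x y).trans (min_eq_left (h x y))

end LevyProkhorovDirac

section Ergodic

variable {α : Type*} [MeasurableSpace α] {f : α → α} {μ : Measure α}

theorem ergodic_dirac_of_isFixedPt (hf : Measurable f) {x : α} (hx : IsFixedPt f x) :
    Ergodic f (Measure.dirac x) :=
  ⟨⟨hf, by rw [Measure.map_dirac' hf, hx]⟩, ⟨fun s hs _ => eventuallyConst_set.2 <|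
    (em (x ∈ s)).imp (ae_dirac_iff hs).2 (ae_dirac_iff hs.compl).2⟩⟩

theorem Ergodic.ae_comp_le_of_preimage_setOf_lt (hf : Ergodic f μ) {φ : α → ℝ}
    (hφ : Integrable φ μ) (hφm : Measurable φ)
    (hinv : f ⁻¹' {x | φ x < φ (f x)} = {x | φ x < φ (f x)}) : ∀ᵐ x ∂μ, φ (f x) ≤ φ x := by
  rcases hf.ae_empty_or_univ (measurableSet_lt hφm (hφm.comp hf.measurable)) hinv with h | h
  · filter_upwards [h.mem_iff] with x hx using not_lt.1 hx.1
  · have hle : φ ≤ᵐ[μ] φ ∘ f := h.mem_iff.mono fun x hx => (hx.2 trivial).le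
    have hint : ∫ x, φ x ∂μ = ∫ x, (φ ∘ f) x ∂μ := by
      rw [comp_def, ← integral_map hf.measurable.aemeasurable (by rw [hf.map_eq]; exact hφ.1),
        hf.map_eq]
    have heq := (integral_eq_iff_of_ae_le hφ
      (hf.toMeasurePreserving.integrable_comp_of_integrable hφ) hle).1 hint
    filter_upwards [heq] with x hx using hx.ge

theorem Ergodic.ae_eq_self_of_strictMono [LinearOrder α] (hf : Ergodic f μ) (hmono : StrictMono f)
    {φ : α → ℝ} (hφ : StrictMono φ) (hφi : Integrable φ μ) (hφm : Measurable φ) :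
    ∀ᵐ x ∂μ, f x = x := by
  have up := hf.ae_comp_le_of_preimage_setOf_lt hφi hφm <| by
    ext x; simp only [mem_preimage, mem_ofPred_eq, hφ.lt_iff_lt, hmono.lt_iff_lt]
  have down := hf.ae_comp_le_of_preimage_setOf_lt hφi.neg hφm.neg <| by
    ext x; simp only [mem_preimage, mem_ofPred_eq, Pi.neg_apply, neg_lt_neg_iff, hφ.lt_iff_lt,
      hmono.lt_iff_lt]
  filter_upwards [up, down] with x h₁ h₂
  exact hφ.injective (h₁.antisymm (neg_le_neg_iff.1 h₂))

theorem Ergodic.exists_isFixedPt_eq_dirac_of_ae_eq_self [MeasurableSpace.CountablySeparated α]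
    [IsProbabilityMeasure μ] (hf : Ergodic f μ) (hid : ∀ᵐ x ∂μ, f x = x) :
    ∃ c, IsFixedPt f c ∧ μ = Measure.dirac c := by
  have : Nonempty α := nonempty_of_isProbabilityMeasure μ
  obtain ⟨c, hc⟩ := hf.ae_eq_const_of_ae_eq_comp₀ (g := id) measurable_id.nullMeasurable hid
  obtain ⟨x, hxc : x = c, hfx⟩ := (hc.and hid).exists
  refine ⟨c, hxc ▸ hfx, ?_⟩
  calc μ = μ.map id := Measure.map_id.symm
    _ = μ.map (fun _ => c) := Measure.map_congr hc
    _ = Measure.dirac c := by rw [Measure.map_const, measure_univ, one_smul]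

theorem Ergodic.exists_isFixedPt_eq_dirac_of_strictMono {a b : ℝ} {f : Icc a b → Icc a b}
    {μ : Measure (Icc a b)} [IsProbabilityMeasure μ] (hf : Ergodic f μ) (hmono : StrictMono f) :
    ∃ c, IsFixedPt f c ∧ μ = Measure.dirac c := by
  have hint : Integrable (fun x : Icc a b => (x : ℝ)) μ :=
    .of_bound measurable_subtype_coe.aestronglyMeasurable (max |a| |b|)
      (ae_of_all _ fun x => abs_le_max_abs_abs x.2.1 x.2.2)
  exact hf.exists_isFixedPt_eq_dirac_of_ae_eq_self <|
    hf.ae_eq_self_of_strictMono hmono (Subtype.strictMono_coe _) hint measurable_subtype_coe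

end Ergodic

/-- for an order-preserving homeomorphism `f` of `[0,1]`, the map `x ↦ δ_x` is
a bijective isometry from the fixed-point set `Fix(f)` (Euclidean metric) onto the set of
`f`-invariant ergodic Borel probability measures with the Lévy–Prokhorov metric. -/
theorem dirac_isometry_fixedPoints_onto_ergodicMeasures
    (f : (Set.Icc (0:ℝ) 1) ≃ₜ (Set.Icc (0:ℝ) 1)) (hf : StrictMono f) :
    Isometry (fun x : {x : Set.Icc (0:ℝ) 1 // f x = x} =>
        ((LevyProkhorov.toMeasureEquiv (α := ProbabilityMeasure (Set.Icc (0:ℝ) 1))).symm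
          (MeasureTheory.diracProba (x : Set.Icc (0:ℝ) 1)))) ∧
    Function.Injective (fun x : {x : Set.Icc (0:ℝ) 1 // f x = x} =>
        ((LevyProkhorov.toMeasureEquiv (α := ProbabilityMeasure (Set.Icc (0:ℝ) 1))).symm
          (MeasureTheory.diracProba (x : Set.Icc (0:ℝ) 1)))) ∧
    Set.range (fun x : {x : Set.Icc (0:ℝ) 1 // f x = x} =>
        ((LevyProkhorov.toMeasureEquiv (α := ProbabilityMeasure (Set.Icc (0:ℝ) 1))).symm
          (MeasureTheory.diracProba (x : Set.Icc (0:ℝ) 1)))) = ergodicMeasures (⇑f) := by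
  have hiso : Isometry (fun x : {x : Set.Icc (0:ℝ) 1 // f x = x} =>
      LevyProkhorov.toMeasureEquiv.symm (diracProba (x : Set.Icc (0:ℝ) 1))) :=
    (isometry_levyProkhorov_diracProba_of_dist_le_one fun x y : Set.Icc (0:ℝ) 1 =>
      Real.dist_le_of_mem_Icc_01 x.2 y.2).comp isometry_subtype_coe
  refine ⟨hiso, hiso.injective, Set.ext fun μ => ⟨?_, fun hμ => ?_⟩⟩
  · rintro ⟨⟨x, hx⟩, rfl⟩
    exact ergodic_dirac_of_isFixedPt f.continuous.measurable hx
  · obtain ⟨c, hc, hμc⟩ := Ergodic.exists_isFixedPt_eq_dirac_of_strictMono hμ hf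
    exact ⟨⟨c, hc⟩, (Equiv.symm_apply_eq _).2 (Subtype.ext hμc.symm)⟩
end
end

section
/- Let f be an orientation-preserving homeomorphism of the circle S¹ = ℝ/ℤ whose rotation number is rational. Then f has a periodic point, there exists m ∈ ℕ such that every periodic point of f has minimal period m, and every f-invariant ergodic Borel probability measure equals the uniform measure (1/m) Σ_{i=0}^{m−1} δ_{fⁱ(P)} supported on the orbit of some periodic point P of f. -/
/-! Lift `f` to `G : CircleDeg1Lift` with translation number `p / q` in lowest terms. If `f^[n]`
fixes `x`, then `G ^ n` moves a lift of `x` by an integer `k` with `k / n = p / q`, so `q ∣ n`;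
and since `G ^ q - p` is monotone, a point it fixes after `n / q` steps is already fixed by it.
Hence every periodic point has minimal period `q`. The map `G ^ q - p` has a fixed point, so its
orbits are monotone and trapped between two consecutive fixed points: they converge, and a point
whose orbit comes back near it on the circle is fixed. By Poincaré recurrence every invariant
probability measure is therefore carried by the fixed points of `f^[q]`. For an ergodic one, the
union of the first `q` preimages of a set `E` is invariant mod `ν`, so `E` has measure `0` or at
least `1 / q`; thus `ν` has an atom, and the orbit of that atom, `q` points of equal mass, carries
all of `ν`. -/

open MeasureTheory Filter Set Topology ENNReal Function

theorem MeasureTheory.Ergodic.measure_eq_zero_or_inv_le {X : Type*} [MeasurableSpace X]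
    {T : X → X} {μ : Measure X} [IsProbabilityMeasure μ] (hT : Ergodic T μ) {m : ℕ}
    (hm : 0 < m) (hfix : ∀ᵐ x ∂μ, T^[m] x = x) {E : Set X} (hE : MeasurableSet E) :
    μ E = 0 ∨ (m : ℝ≥0∞)⁻¹ ≤ μ E := by
  set S := ⋃ i ∈ Finset.range m, T^[i] ⁻¹' E
  have hS : MeasurableSet S :=
    Finset.measurableSet_biUnion _ fun i _ => hT.measurable.iterate i hE
  have hES : E ⊆ S := subset_biUnion_of_mem (u := fun i => T^[i] ⁻¹' E) (Finset.mem_range.2 hm)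
  have hSle : μ S ≤ m * μ E :=
    calc μ S ≤ ∑ i ∈ Finset.range m, μ (T^[i] ⁻¹' E) := measure_biUnion_finset_le _ _
      _ = m * μ E := by
        simp [(hT.toMeasurePreserving.iterate _).measure_preimage hE.nullMeasurableSet]
  -- `T ⁻¹' S` is the union of `T^[i] ⁻¹' E` for `1 ≤ i ≤ m`, and `T^[m] ⁻¹' E =ᵐ E`.
  have hinv : T ⁻¹' S ≤ᵐ[μ] S := by
    filter_upwards [hfix] with x hx (hxS : x ∈ T ⁻¹' S)
    show x ∈ S
    simp only [S, mem_preimage, mem_iUnion₂, Finset.mem_range, exists_prop] at hxS ⊢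
    obtain ⟨i, hi, hxE⟩ := hxS
    rw [← iterate_succ_apply] at hxE
    rcases Nat.lt_or_ge (i + 1) m with h | h
    · exact ⟨i + 1, h, hxE⟩
    · exact ⟨0, hm, by rwa [show i.succ = m by omega, hx] at hxE⟩
  rcases hT.ae_empty_or_univ_of_preimage_ae_le hS.nullMeasurableSet hinv with h | h
  · exact .inl (measure_mono_null hES (by rw [measure_congr h, measure_empty]))
  · rw [measure_congr h, measure_univ] at hSle
    exact .inr ((ENNReal.inv_le_iff_le_mul (by simp) (by simp)).2 hSle)

theorem MeasureTheory.Measure.exists_le_measure_singleton {X : Type*} [TopologicalSpace X]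
    [HereditarilyLindelofSpace X] [MeasurableSpace X] (μ : Measure X) [μ.OuterRegular]
    [NeZero μ] {ε : ℝ≥0∞} (h : ∀ U, IsOpen U → μ U ≠ 0 → ε ≤ μ U) : ∃ x, ε ≤ μ {x} := by
  obtain ⟨z, hz⟩ := μ.nonempty_support (NeZero.ne μ)
  refine ⟨z, not_lt.1 fun hz_lt => ?_⟩
  obtain ⟨U, hzU, hU, hUε⟩ := Set.exists_isOpen_lt_of_lt {z} ε hz_lt
  have hU0 : 0 < μ U := (mem_support_iff_forall z).1 hz U (hU.mem_nhds (hzU rfl))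
  exact (h U hU hU0.ne').not_gt hUε

theorem MeasureTheory.Ergodic.eq_smul_sum_dirac_of_ae_iterate_eq {X : Type*}
    [TopologicalSpace X] [T1Space X] [HereditarilyLindelofSpace X] [MeasurableSpace X]
    [OpensMeasurableSpace X] {T : X → X} (hinj : Injective T) {μ : Measure X}
    [IsProbabilityMeasure μ] [μ.OuterRegular] (hT : Ergodic T μ) {m : ℕ} (hm : 0 < m)
    (hfix : ∀ᵐ x ∂μ, T^[m] x = x) (hper : ∀ x, T^[m] x = x → minimalPeriod T x = m) :
    ∃ P, T^[m] P = P ∧ μ = (m : ℝ≥0∞)⁻¹ • ∑ i ∈ Finset.range m, Measure.dirac (T^[i] P) := by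
  obtain ⟨P, hP⟩ := μ.exists_le_measure_singleton fun U hU hU0 =>
    (hT.measure_eq_zero_or_inv_le hm hfix hU.measurableSet).resolve_left hU0
  have hPfix : T^[m] P = P := by
    by_contra hne
    refine (ENNReal.inv_ne_zero.2 (natCast_ne_top m)) (le_zero_iff.1 (hP.trans_eq ?_))
    exact measure_mono_null (singleton_subset_iff.2 hne) (ae_iff.1 hfix)
  have horbit (i : ℕ) : μ {T^[i] P} = μ {P} := by
    rw [← (hT.toMeasurePreserving.iterate i).measure_preimage
      (measurableSet_singleton _).nullMeasurableSet, ← image_singleton,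
      preimage_image_eq _ (hinj.iterate i)]
  have hdisj :
      (Finset.range m : Set ℕ).Pairwise (Disjoint on fun i => ({T^[i] P} : Set X)) := by
    intro i hi j hj hij
    refine disjoint_singleton.2 fun h => hij ?_
    refine iterate_injOn_Iio_minimalPeriod ?_ ?_ h
    · simpa [hper P hPfix] using hi
    · simpa [hper P hPfix] using hj
  set O := ⋃ i ∈ Finset.range m, ({T^[i] P} : Set X)
  have hO : μ O = m * μ {P} := by
    rw [measure_biUnion_finset hdisj fun _ _ => measurableSet_singleton _]
    simp [horbit]
  have hmul : (m : ℝ≥0∞) * μ {P} = 1 :=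
    le_antisymm (hO ▸ prob_le_one)
      ((ENNReal.inv_le_iff_le_mul (by simp) (by simp)).1 hP)
  have hPmass : μ {P} = (m : ℝ≥0∞)⁻¹ :=
    ENNReal.eq_inv_of_mul_eq_one_left ((mul_comm _ _).trans hmul)
  have hOc : μ Oᶜ = 0 :=
    (prob_compl_eq_zero_iff
      (Finset.measurableSet_biUnion _ fun _ _ => measurableSet_singleton _)).2 (hO.trans hmul)
  refine ⟨P, hPfix, ?_⟩
  calc μ = μ.restrict O := (Measure.restrict_eq_self_of_ae_mem hOc).symm
    _ = _ := by
      rw [Measure.restrict_biUnion_finset hdisj fun _ => measurableSet_singleton _]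
      simp only [Measure.restrict_singleton, horbit, hPmass, Measure.sum_fintype,
        Finset.smul_sum]
      exact Finset.sum_attach _ fun i => (m : ℝ≥0∞)⁻¹ • Measure.dirac (T^[i] P)

theorem AddCircle.coe_eq_coe_iff_exists_int {x y : ℝ} :
    (x : AddCircle (1 : ℝ)) = y ↔ ∃ k : ℤ, y = x + k := by
  rw [eq_comm, ← sub_eq_zero, ← AddCircle.coe_sub, AddCircle.coe_eq_zero_iff]
  refine exists_congr fun k => ?_
  simp only [zsmul_one]
  constructor <;> intro h <;> linarith

namespace CircleDeg1Lift

variable {f : AddCircle (1 : ℝ) → AddCircle (1 : ℝ)} {G : CircleDeg1Lift}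

theorem surjective_of_semiconj (h : Semiconj ((↑) : ℝ → AddCircle (1 : ℝ)) G f)
    (hf : Surjective f) : Surjective G := by
  intro y
  obtain ⟨c, hc⟩ := hf y
  obtain ⟨x, rfl⟩ := QuotientAddGroup.mk_surjective c
  obtain ⟨k, hk⟩ := AddCircle.coe_eq_coe_iff_exists_int.1 ((h x).trans hc)
  exact ⟨x + k, by rw [map_add_int, hk]⟩

theorem iterate_coe_eq_coe_iff (h : Semiconj ((↑) : ℝ → AddCircle (1 : ℝ)) G f) {n : ℕ}
    {x : ℝ} : f^[n] x = x ↔ ∃ k : ℤ, (G ^ n) x = x + k := by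
  rw [← (h.iterate_right n) x, eq_comm, AddCircle.coe_eq_coe_iff_exists_int, coe_pow]

theorem den_dvd_of_pow_apply_eq_add_int {r : ℚ} (hτ : G.translationNumber = r) {n : ℕ}
    (hn : 0 < n) {x : ℝ} {k : ℤ} (h : (G ^ n) x = x + k) : r.den ∣ n := by
  have hr : r = Rat.divInt k n := by
    rw [Rat.divInt_eq_div]
    exact_mod_cast hτ.symm.trans (G.translationNumber_of_map_pow_eq_add_int h hn)
  exact Int.natCast_dvd_natCast.1 (hr ▸ Rat.den_dvd k n)

theorem pow_den_apply_eq_add_num {r : ℚ} (hτ : G.translationNumber = r) {n : ℕ}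
    (hn : 0 < n) {x : ℝ} {k : ℤ} (h : (G ^ n) x = x + k) : (G ^ r.den) x = x + r.num := by
  obtain ⟨s, rfl⟩ := G.den_dvd_of_pow_apply_eq_add_int hτ hn h
  have hs : 0 < s := Nat.pos_of_mul_pos_left hn
  have hk : (k : ℝ) = s * r.num := by
    have hτn := hτ.symm.trans (G.translationNumber_of_map_pow_eq_add_int h hn)
    have hnum : (r.num : ℝ) = r * r.den := by exact_mod_cast (Rat.mul_den_eq_num r).symm
    rw [hnum]
    field_simp at hτn ⊢
    push_cast at hτn
    linarith
  rwa [pow_mul, coe_pow, hk, iterate_pos_eq_iff _ hs] at h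

theorem den_dvd_and_isPeriodicPt_den (h : Semiconj ((↑) : ℝ → AddCircle (1 : ℝ)) G f) {r : ℚ}
    (hτ : G.translationNumber = r) {n : ℕ} (hn : 0 < n) {y : AddCircle (1 : ℝ)}
    (hy : IsPeriodicPt f n y) : r.den ∣ n ∧ IsPeriodicPt f r.den y := by
  obtain ⟨x, rfl⟩ := QuotientAddGroup.mk_surjective y
  obtain ⟨k, hk⟩ := (iterate_coe_eq_coe_iff h).1 hy
  exact ⟨G.den_dvd_of_pow_apply_eq_add_int hτ hn hk,
    (iterate_coe_eq_coe_iff h).2 ⟨_, G.pow_den_apply_eq_add_num hτ hn hk⟩⟩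

theorem minimalPeriod_eq_den (h : Semiconj ((↑) : ℝ → AddCircle (1 : ℝ)) G f) {r : ℚ}
    (hτ : G.translationNumber = r) {n : ℕ} (hn : 0 < n) {y : AddCircle (1 : ℝ)}
    (hy : IsPeriodicPt f n y) : minimalPeriod f y = r.den :=
  Nat.dvd_antisymm (den_dvd_and_isPeriodicPt_den h hτ hn hy).2.minimalPeriod_dvd
    (den_dvd_and_isPeriodicPt_den h hτ (hy.minimalPeriod_pos hn)
      (isPeriodicPt_minimalPeriod f y)).1

theorem apply_eq_self_of_mapClusterPt_of_mem_Ico {g : CircleDeg1Lift} {a x : ℝ} (ha : g a = a)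
    (hx : x ∈ Ico a (a + 1))
    (hrec : MapClusterPt (x : AddCircle (1 : ℝ)) atTop
      fun n => ((g^[n] x : ℝ) : AddCircle (1 : ℝ))) :
    g x = x := by
  rcases hx.1.eq_or_lt with rfl | hax
  · exact ha
  have ha1 : g (a + 1) = a + 1 := by rw [map_add_one, ha]
  have hbound (n : ℕ) : g^[n] x ∈ Icc a (a + 1) :=
    ⟨iterate_fixed ha n ▸ g.monotone.iterate n hx.1,
      iterate_fixed ha1 n ▸ g.monotone.iterate n hx.2.le⟩
  obtain ⟨L, hL, hLx⟩ : ∃ L, Tendsto (fun n => g^[n] x) atTop (𝓝 L) ∧ (L = x → g x = x) := by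
    rcases le_total x (g x) with hle | hge
    · have hmono := g.monotone.monotone_iterate_of_le_map hle
      have hL := tendsto_atTop_ciSup hmono ⟨a + 1, forall_mem_range.2 fun n => (hbound n).2⟩
      exact ⟨_, hL, fun hLx => le_antisymm ((hmono.ge_of_tendsto hL 1).trans_eq hLx) hle⟩
    · have hanti := g.monotone.antitone_iterate_of_map_le hge
      have hL := tendsto_atTop_ciInf hanti ⟨a, forall_mem_range.2 fun n => (hbound n).1⟩
      exact ⟨_, hL, fun hLx => le_antisymm hge (hLx.symm.trans_le (hanti.le_of_tendsto hL 1))⟩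
  have hLmem : L ∈ Icc a (a + 1) := isClosed_Icc.mem_of_tendsto hL (Eventually.of_forall hbound)
  have htend : Tendsto (fun n => ((g^[n] x : ℝ) : AddCircle (1 : ℝ))) atTop
      (𝓝 (L : AddCircle (1 : ℝ))) :=
    ((AddCircle.continuous_mk' 1).tendsto L).comp hL
  have hxL : (x : AddCircle (1 : ℝ)) = L := eq_of_nhds_neBot (ClusterPt.mono hrec htend).neBot
  obtain ⟨k, hk⟩ := AddCircle.coe_eq_coe_iff_exists_int.1 hxL
  have hk0 : k = 0 := by
    have hk1 : |(k : ℝ)| < 1 := abs_lt.2 ⟨by linarith [hLmem.1, hx.2], by linarith [hLmem.2]⟩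
    exact Int.abs_lt_one_iff.1 (by exact_mod_cast hk1)
  exact hLx (by simpa [hk0] using hk)

theorem apply_eq_add_of_mapClusterPt {H : CircleDeg1Lift} {a x : ℝ} {p : ℤ} (ha : H a = a + p)
    (hrec : MapClusterPt (x : AddCircle (1 : ℝ)) atTop
      fun n => (((H ^ n) x : ℝ) : AddCircle (1 : ℝ))) :
    H x = x + p := by
  let g : CircleDeg1Lift :=
    ⟨⟨fun y => H y - p, fun _ _ hyz => sub_le_sub_right (H.mono hyz) _⟩,
      fun y => by simp only [map_add_one]; ring⟩
  have hg (n : ℕ) (y : ℝ) : g^[n] y = (H ^ n) y - n * p := by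
    induction n generalizing y with
    | zero => simp
    | succ n ih =>
      rw [iterate_succ_apply', ih, pow_succ', mul_apply]
      have hsub := H.map_sub_int ((H ^ n) y) (n * p)
      push_cast at hsub
      change H _ - p = _
      rw [hsub]
      push_cast
      ring
  have ha' : g (a + ⌊x - a⌋) = a + ⌊x - a⌋ := by
    show H _ - p = _
    rw [map_add_int, ha]; ring
  have hx' : x ∈ Ico (a + ⌊x - a⌋) (a + ⌊x - a⌋ + 1) :=
    ⟨by linarith [Int.floor_le (x - a)], by linarith [Int.lt_floor_add_one (x - a)]⟩
  have hgx := apply_eq_self_of_mapClusterPt_of_mem_Ico ha' hx' (by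
    convert hrec using 2 with n
    exact AddCircle.coe_eq_coe_iff_exists_int.2 ⟨n * p, by rw [hg]; push_cast; ring⟩)
  show H x = x + p
  linarith [show H x - p = x from hgx]

theorem isPeriodicPt_den_of_mapClusterPt (h : Semiconj ((↑) : ℝ → AddCircle (1 : ℝ)) G f)
    (hG : Continuous G) {r : ℚ} (hτ : G.translationNumber = r) {y : AddCircle (1 : ℝ)}
    (hy : MapClusterPt y atTop fun n => (f^[r.den])^[n] y) :
    IsPeriodicPt f r.den y := by
  obtain ⟨a, ha⟩ := (G.translationNumber_eq_rat_iff hG r.pos).1 (by rw [hτ, Rat.cast_def])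
  obtain ⟨x, rfl⟩ := QuotientAddGroup.mk_surjective y
  refine (iterate_coe_eq_coe_iff h).2 ⟨r.num, apply_eq_add_of_mapClusterPt ha ?_⟩
  simpa only [← iterate_mul, ← (h.iterate_right _) _, ← coe_pow, pow_mul] using hy

end CircleDeg1Lift

/-- an orientation-preserving circle homeomorphism with rational rotation
number has a periodic point, all periodic points have the same minimal period `m`, and
every ergodic invariant Borel probability measure is the uniform measure on the orbit of a
periodic point. -/
theorem ergodicMeasures_of_rationalRotationNumber_circle
    [MeasurableSpace (AddCircle (1:ℝ))] [BorelSpace (AddCircle (1:ℝ))]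
    (f : AddCircle (1:ℝ) ≃ₜ AddCircle (1:ℝ))
    (F : ℝ → ℝ) (hF_mono : StrictMono F) (hF_deg : ∀ x : ℝ, F (x + 1) = F x + 1)
    (hF_lift : ∀ x : ℝ, f (x : AddCircle (1:ℝ)) = ((F x : ℝ) : AddCircle (1:ℝ)))
    (hρ : ∃ r : ℚ, Filter.Tendsto (fun n : ℕ => F^[n] 0 / (n : ℝ)) Filter.atTop (𝓝 (r : ℝ))) :
    (∃ (x : AddCircle (1:ℝ)) (n : ℕ), 0 < n ∧ (⇑f)^[n] x = x) ∧
    ∃ m : ℕ, 0 < m ∧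
      (∀ x : AddCircle (1:ℝ), (∃ n : ℕ, 0 < n ∧ (⇑f)^[n] x = x) →
        Function.minimalPeriod (⇑f) x = m) ∧
      (∀ ν : Measure (AddCircle (1:ℝ)), IsProbabilityMeasure ν → Ergodic (⇑f) ν →
        ∃ P : AddCircle (1:ℝ), (⇑f)^[m] P = P ∧
          ν = (m : ℝ≥0∞)⁻¹ • ∑ i ∈ Finset.range m, Measure.dirac ((⇑f)^[i] P)) := by
  obtain ⟨r, hr⟩ := hρ
  let G : CircleDeg1Lift := ⟨⟨F, hF_mono.monotone⟩, hF_deg⟩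
  have hG : Semiconj ((↑) : ℝ → AddCircle (1 : ℝ)) G f := fun x => (hF_lift x).symm
  have hGc : Continuous G :=
    G.continuous_iff_surjective.2 (G.surjective_of_semiconj hG f.surjective)
  have hτ : G.translationNumber = r := tendsto_nhds_unique G.tendsto_translation_number₀
    (by simp only [CircleDeg1Lift.coe_pow]; exact hr)
  obtain ⟨a, ha⟩ := (G.translationNumber_eq_rat_iff hGc r.pos).1 (by rw [hτ, Rat.cast_def])
  refine ⟨⟨a, r.den, r.pos, (CircleDeg1Lift.iterate_coe_eq_coe_iff hG).2 ⟨r.num, ha⟩⟩,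
    r.den, r.pos, fun x ⟨n, hn, hx⟩ => CircleDeg1Lift.minimalPeriod_eq_den hG hτ hn hx,
    fun ν _ hν => ?_⟩
  have hfix : ∀ᵐ x ∂ν, f^[r.den] x = x :=
    ((hν.toMeasurePreserving.iterate _).conservative.ae_frequently_mem_of_mem_nhds).mono
      fun x hx => CircleDeg1Lift.isPeriodicPt_den_of_mapClusterPt hG hGc hτ
        (mapClusterPt_iff_frequently.2 hx)
  exact hν.eq_smul_sum_dirac_of_ae_iterate_eq f.injective r.pos hfix
    fun x hx => CircleDeg1Lift.minimalPeriod_eq_den hG hτ r.pos hx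
end

section
/- Let (Z,d) be a compact metric space. Then the upper metric order has the intermediate value property on subsets of Z: for every β ∈ [0,∞] with β ≤ mo⁺(Z), there exists a subset Y ⊆ Z such that mo⁺(Y) = β. -/
open Filter Metric Set Topology

noncomputable section

/-- Maximal cardinality of an `ε`-separated subset of `Y` (as `ℕ∞`). -/
def sepNum {M : Type*} [PseudoMetricSpace M] (Y : Set M) (ε : ℝ) : ℕ∞ :=
  ⨆ (s : Finset M) (_ : ↑s ⊆ Y ∧ ∀ x ∈ s, ∀ y ∈ s, x ≠ y → ε ≤ dist x y), (s.card : ℕ∞)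

/-- Upper metric order: `mo⁺(Y) = limsup_{ε→0⁺} log log S_Y(ε) / (−log ε)`. -/
def upperMetricOrder {M : Type*} [PseudoMetricSpace M] (Y : Set M) : EReal :=
  Filter.limsup
    (fun ε : ℝ => ((Real.log (Real.log ((sepNum Y ε).toNat : ℝ)) / (-Real.log ε) : ℝ) : EReal))
    (𝓝[>] (0:ℝ))

/-!
For totally bounded `Y`, `mo⁺(Y) > γ ≥ 0` forces `ε`-separated subsets of `Y` with
`exp (ε ^ (-γ))` points at arbitrarily small scales `ε` (`IsRich`), and these force `mo⁺(Y) ≥ γ`.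
Given `0 ≤ β < mo⁺(Z)`, a finite cover argument and compactness give a point `x` all of whose
balls are rich at an exponent `b > β`. In balls shrinking to `x` we pick scales `c n → 0` and
`c n`-separated sets `G n` of about `exp (c n ^ (-β))` points, where `c n` is, up to a factor
`2`, the largest scale at which the current ball still has `exp (δ ^ (-(β + η n)))` separated
points, with `η n → 0`. Then `Y = ⋃ n, G n` has `S_Y(c n) ≥ exp (c n ^ (-β))`. For
`2 c (n+1) < ε ≤ 2 c n`, the first `n + 1` sets contribute at most
`(n + 1) (exp ((ε/2) ^ (-β)) + 1)` points to an `ε`-separated set, and all later ones lie in the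
`(n+1)`-st ball, which by maximality of `c (n+1)` has fewer than
`exp (ε ^ (-(β + η (n+1)))) + 1` of them; as `n = O(log (1/ε))`, `mo⁺(Y) = β`.
-/

namespace UpperMetricOrder

open Real Asymptotics

theorem le_log_log_div_neg_log {ε b : ℝ} {S : ℕ} (hε0 : 0 < ε) (hε1 : ε < 1)
    (h : exp (ε ^ (-b)) ≤ S) : b ≤ log (log S) / -log ε := by
  have hL : 0 < -log ε := neg_pos.2 (log_neg hε0 hε1)
  have hlog : ε ^ (-b) ≤ log S := by simpa using log_le_log (exp_pos _) h
  rw [le_div_iff₀ hL]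
  calc b * -log ε = log (ε ^ (-b)) := by rw [log_rpow hε0]; ring
    _ ≤ log (log S) := log_le_log (rpow_pos_of_pos hε0 _) hlog

theorem log_log_div_neg_log_le {ε b : ℝ} {S : ℕ} (hε0 : 0 < ε) (hε1 : ε < 1) (hb : 0 ≤ b)
    (h : (S : ℝ) ≤ exp (ε ^ (-b))) : log (log S) / -log ε ≤ b := by
  have hL : 0 < -log ε := neg_pos.2 (log_neg hε0 hε1)
  rw [div_le_iff₀ hL]
  rcases (Real.log_natCast_nonneg S).eq_or_lt with h0 | hpos
  · rw [← h0, log_zero]; positivity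
  have hS : (0 : ℝ) < S := Nat.cast_pos.2 (Nat.pos_of_ne_zero (by rintro rfl; simp at hpos))
  calc log (log S) ≤ log (ε ^ (-b)) := log_le_log hpos (by simpa using log_le_log hS h)
    _ = b * -log ε := by rw [log_rpow hε0]; ring

theorem eventually_add_neg_log_add_mul_rpow_lt {a b : ℝ} (hab : a < b) (hb : 0 < b) (C A : ℝ) :
    ∀ᶠ ε in 𝓝[>] (0 : ℝ), C + -log ε + A * ε ^ (-a) < ε ^ (-b) := by
  have hgrow : Tendsto (fun ε : ℝ => ε ^ (-b)) (𝓝[>] 0) atTop :=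
    tendsto_rpow_neg_nhdsGT_zero (neg_lt_zero.2 hb)
  have hC : (fun _ : ℝ => C) =o[𝓝[>] 0] fun ε => ε ^ (-b) :=
    isLittleO_const_left.2 (Or.inr (tendsto_norm_atTop_atTop.comp hgrow))
  have hlog : (fun ε => -log ε) =o[𝓝[>] 0] fun ε => ε ^ (-b) :=
    (isLittleO_log_rpow_nhdsGT_zero (neg_lt_zero.2 hb)).neg_left
  have hpow : (fun ε : ℝ => ε ^ (-a)) =o[𝓝[>] 0] fun ε => ε ^ (-b) := by
    refine (isLittleO_iff_tendsto' (eventually_mem_nhdsWithin.mono fun ε hε h =>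
      absurd h (rpow_pos_of_pos hε _).ne')).2 ?_
    refine (((tendsto_nhdsWithin_of_tendsto_nhds tendsto_id).rpow_const_nhds_zero
      (sub_pos.2 hab)).congr' ?_)
    filter_upwards [self_mem_nhdsWithin] with ε (hε : 0 < ε)
    rw [id, ← rpow_sub hε]
    ring_nf
  filter_upwards [((hC.add hlog).add (hpow.const_mul_left A)).def (half_pos one_pos),
    self_mem_nhdsWithin] with ε hle (hε : 0 < ε)
  have hpos : 0 < ε ^ (-b) := rpow_pos_of_pos hε _
  rw [Real.norm_of_nonneg hpos.le] at hle
  linarith [le_abs_self (C + -log ε + A * ε ^ (-a)), Real.norm_eq_abs (C + -log ε + A * ε ^ (-a))]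

theorem rpow_neg_le_rpow_neg {x y a a' : ℝ} (hx : 0 < x) (hxy : x ≤ y) (hx1 : x ≤ 1) (ha : 0 ≤ a)
    (haa' : a ≤ a') : y ^ (-a) ≤ x ^ (-a') :=
  (rpow_le_rpow_of_nonpos hx hxy (neg_nonpos.2 ha)).trans
    (rpow_le_rpow_of_exponent_ge hx hx1 (neg_le_neg haa'))

theorem exists_le_succ_lt_le {u : ℕ → ℝ} (hu : Tendsto u atTop (𝓝 0)) {ε : ℝ} (hε : 0 < ε)
    {N : ℕ} (hN : ε ≤ u N) : ∃ n, N ≤ n ∧ u (n + 1) < ε ∧ ε ≤ u n := by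
  classical
  have hex : ∃ k, u (N + k + 1) < ε := by
    obtain ⟨m, hm⟩ := eventually_atTop.1 (hu.eventually (gt_mem_nhds hε))
    exact ⟨m, hm _ (by omega)⟩
  refine ⟨N + Nat.find hex, by omega, Nat.find_spec hex, ?_⟩
  rcases h : Nat.find hex with _ | k
  · simpa using hN
  · simpa [add_assoc] using Nat.find_min hex (h ▸ k.lt_succ_self)

theorem exists_mem_forall_lt_two_mul {D : Set ℝ} (hne : D.Nonempty) (hbdd : BddAbove D)
    (hpos : ∀ δ ∈ D, 0 < δ) : ∃ c ∈ D, ∀ δ ∈ D, δ < 2 * c := by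
  obtain ⟨δ₀, hδ₀⟩ := hne
  obtain ⟨c, hc, hlt⟩ := exists_lt_of_lt_csSup ⟨δ₀, hδ₀⟩
    (half_lt_self ((hpos δ₀ hδ₀).trans_le (le_csSup hbdd hδ₀)))
  exact ⟨c, hc, fun δ hδ => (le_csSup hbdd hδ).trans_lt (by linarith)⟩

variable {M : Type*} [PseudoMetricSpace M]

section Separated

variable {Y : Set M} {ε : ℝ} {s : Finset M}

def IsSep (ε : ℝ) (s : Finset M) : Prop :=
  (s : Set M).Pairwise fun x y => ε ≤ dist x y

theorem IsSep.subset {t : Finset M} (h : IsSep ε s) (hts : t ⊆ s) : IsSep ε t :=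
  Set.Pairwise.mono (Finset.coe_subset.2 hts) h

theorem IsSep.card_le_one (h : IsSep ε s) (hs : ∀ x ∈ s, ∀ y ∈ s, dist x y < ε) :
    s.card ≤ 1 :=
  Finset.card_le_one.2 fun x hx y hy => by_contra fun hxy => (h hx hy hxy).not_gt (hs x hx y hy)

theorem le_sepNum (hs : ↑s ⊆ Y) (h : IsSep ε s) : (s.card : ℕ∞) ≤ sepNum Y ε :=
  le_iSup₂_of_le s ⟨hs, fun _ hx _ hy hxy => h hx hy hxy⟩ le_rfl

theorem sepNum_le {n : ℕ} (h : ∀ s : Finset M, ↑s ⊆ Y → IsSep ε s → s.card ≤ n) :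
    sepNum Y ε ≤ n :=
  iSup₂_le fun s hs => Nat.cast_le.2 (h s hs.1 fun _ hx _ hy hxy => hs.2 _ hx _ hy hxy)

theorem exists_card_eq_of_le_sepNum {n : ℕ} (h : (n : ℕ∞) ≤ sepNum Y ε) :
    ∃ s : Finset M, ↑s ⊆ Y ∧ IsSep ε s ∧ s.card = n := by
  cases n with
  | zero => exact ⟨∅, by simp, by simp [IsSep], rfl⟩
  | succ n =>
    obtain ⟨s, hs, hlt⟩ : ∃ s : Finset M, (↑s ⊆ Y ∧ IsSep ε s) ∧ (n : ℕ∞) < s.card := by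
      simpa [sepNum, lt_iSup_iff, IsSep, Set.Pairwise] using
        (Nat.cast_lt.2 n.lt_succ_self).trans_le h
    obtain ⟨t, hts, ht⟩ := s.exists_subset_card_eq (Nat.cast_lt.1 hlt)
    exact ⟨t, (Finset.coe_subset.2 hts).trans hs.1, hs.2.subset hts, ht⟩

theorem sepNum_ne_top (hY : TotallyBounded Y) (hε : 0 < ε) : sepNum Y ε ≠ ⊤ := by
  classical
  obtain ⟨t, htf, hYt⟩ := Metric.totallyBounded_iff.1 hY (ε / 2) (half_pos hε)
  refine ne_top_of_le_ne_top (ENat.natCast_ne_top htf.toFinset.card) (sepNum_le fun s hs hsep => ?_)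
  calc s.card ≤ (htf.toFinset.biUnion fun y => s.filter (· ∈ ball y (ε / 2))).card := by
        refine Finset.card_le_card fun z hz => ?_
        obtain ⟨y, hy, hzy⟩ := Set.mem_iUnion₂.1 (hYt (hs hz))
        exact Finset.mem_biUnion.2 ⟨y, htf.mem_toFinset.2 hy, Finset.mem_filter.2 ⟨hz, hzy⟩⟩
    _ ≤ ∑ y ∈ htf.toFinset, (s.filter (· ∈ ball y (ε / 2))).card := Finset.card_biUnion_le
    _ ≤ ∑ _y ∈ htf.toFinset, 1 := Finset.sum_le_sum fun y _ =>
        (hsep.subset (Finset.filter_subset _ s)).card_le_one fun z hz w hw => by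
          have hz' := (Finset.mem_filter.1 hz).2
          have hw' := (Finset.mem_filter.1 hw).2
          linarith [dist_triangle_right z w y, mem_ball.1 hz', mem_ball.1 hw']
    _ = htf.toFinset.card := by simp

theorem card_le_toNat_sepNum (hY : TotallyBounded Y) (hε : 0 < ε) (hs : ↑s ⊆ Y)
    (h : IsSep ε s) : s.card ≤ (sepNum Y ε).toNat := by
  have := le_sepNum hs h
  rwa [← ENat.natCast_toNat (sepNum_ne_top hY hε), Nat.cast_le] at this

theorem toNat_sepNum_le {B : ℝ} (h : ∀ s : Finset M, ↑s ⊆ Y → IsSep ε s → (s.card : ℝ) ≤ B) :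
    ((sepNum Y ε).toNat : ℝ) ≤ B := by
  obtain ⟨s, hs, hsep, hcard⟩ :=
    exists_card_eq_of_le_sepNum (ENat.natCast_toNat_le_self (sepNum Y ε))
  exact hcard ▸ h s hs hsep

end Separated

section Rich

variable {Y Y' : Set M} {γ γ' : ℝ}

def IsRich (Y : Set M) (γ : ℝ) : Prop :=
  ∃ᶠ ε in 𝓝[>] (0 : ℝ), ∃ s : Finset M, ↑s ⊆ Y ∧ IsSep ε s ∧ exp (ε ^ (-γ)) ≤ s.card

theorem IsRich.mono (h : IsRich Y γ) (hY : Y ⊆ Y') : IsRich Y' γ :=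
  Frequently.mono h fun _ ⟨s, hs, hsep, hcard⟩ => ⟨s, hs.trans hY, hsep, hcard⟩

theorem IsRich.le_upperMetricOrder (h : IsRich Y γ) (hY : TotallyBounded Y) :
    (γ : EReal) ≤ upperMetricOrder Y := by
  refine le_limsup_of_frequently_le ?_ (by isBoundedDefault)
  refine (h.and_eventually (Ioo_mem_nhdsGT one_pos)).mono fun ε ⟨⟨s, hs, hsep, hcard⟩, hε⟩ => ?_
  refine EReal.coe_le_coe_iff.2 (le_log_log_div_neg_log hε.1 hε.2 (hcard.trans ?_))
  exact_mod_cast card_le_toNat_sepNum hY hε.1 hs hsep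

theorem isRich_of_lt_upperMetricOrder (hγ : 0 ≤ γ) (h : (γ : EReal) < upperMetricOrder Y) :
    IsRich Y γ := by
  refine ((frequently_lt_of_lt_limsup (by isBoundedDefault) h).and_eventually
    (Ioo_mem_nhdsGT one_pos)).mono fun ε ⟨hlt, hε⟩ => ?_
  obtain ⟨s, hs, hsep, hcard⟩ :=
    exists_card_eq_of_le_sepNum (ENat.natCast_toNat_le_self (sepNum Y ε))
  refine ⟨s, hs, hsep, hcard ▸ le_of_not_ge fun hle => ?_⟩
  exact (EReal.coe_lt_coe_iff.1 hlt).not_ge (log_log_div_neg_log_le hε.1 hε.2 hγ hle)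

theorem upperMetricOrder_le_of_not_isRich (hγ : 0 ≤ γ) (h : ∀ b, γ < b → ¬IsRich Y b) :
    upperMetricOrder Y ≤ γ := by
  refine EReal.le_of_forall_lt_iff_le.1 fun b hb => ?_
  have hγb : γ < b := EReal.coe_lt_coe_iff.1 hb
  refine limsup_le_of_le (by isBoundedDefault) ?_
  filter_upwards [not_frequently.1 (h b hγb), (Ioo_mem_nhdsGT one_pos)] with ε hsmall hε
  refine EReal.coe_le_coe_iff.2 (log_log_div_neg_log_le hε.1 hε.2 (hγ.trans hγb.le) ?_)
  exact toNat_sepNum_le fun s hs hsep => le_of_not_ge fun hge => hsmall ⟨s, hs, hsep, hge⟩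

theorem IsRich.exists_isRich_of_subset_biUnion {C : Set M} (h : IsRich C γ) (hγ' : 0 ≤ γ')
    (hγ : γ' < γ) {ι : Type*} {t : Finset ι} {A : ι → Set M} (hC : C ⊆ ⋃ i ∈ t, A i) :
    ∃ i ∈ t, IsRich (A i) γ' := by
  classical
  by_contra! hpoor
  have hsmall : ∀ᶠ ε in 𝓝[>] (0 : ℝ), ∀ i ∈ t, ∀ s : Finset M, ↑s ⊆ A i → IsSep ε s →
      (s.card : ℝ) < exp (ε ^ (-γ')) :=
    t.eventually_all.2 fun i hi => (not_frequently.1 (hpoor i hi)).mono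
      fun ε hε s hs hsep => lt_of_not_ge fun hge => hε ⟨s, hs, hsep, hge⟩
  obtain ⟨ε, ⟨s, hs, hsep, hcard⟩, hsmall, hlt, hε⟩ := (h.and_eventually (hsmall.and
    ((eventually_add_neg_log_add_mul_rpow_lt hγ (hγ'.trans_lt hγ) (log (t.card + 1)) 1).and
      (Ioo_mem_nhdsGT one_pos)))).exists
  have hcover : s.card ≤ ∑ i ∈ t, (s.filter (· ∈ A i)).card := by
    refine (Finset.card_le_card fun z hz => ?_).trans Finset.card_biUnion_le
    obtain ⟨i, hi, hzi⟩ := Set.mem_iUnion₂.1 (hC (hs hz))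
    exact Finset.mem_biUnion.2 ⟨i, hi, Finset.mem_filter.2 ⟨hz, hzi⟩⟩
  have hL : 0 < -log ε := neg_pos.2 (log_neg hε.1 hε.2)
  have : (s.card : ℝ) < exp (ε ^ (-γ)) := calc
    (s.card : ℝ) ≤ ∑ i ∈ t, ((s.filter (· ∈ A i)).card : ℝ) := by exact_mod_cast hcover
    _ ≤ ∑ _i ∈ t, exp (ε ^ (-γ')) := Finset.sum_le_sum fun i hi =>
        (hsmall i hi _ (fun z hz => (Finset.mem_filter.1 hz).2)
          (hsep.subset (Finset.filter_subset _ s))).le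
    _ ≤ (t.card + 1) * exp (ε ^ (-γ')) := by
        rw [Finset.sum_const, nsmul_eq_mul]; gcongr; linarith
    _ = exp (log (t.card + 1) + ε ^ (-γ')) := by rw [exp_add, exp_log (by positivity)]
    _ < exp (ε ^ (-γ)) := exp_lt_exp.2 (by linarith)
  exact this.not_ge hcard

theorem exists_forall_isRich_closedBall [CompactSpace M] (h : IsRich (univ : Set M) γ)
    (hγ' : 0 ≤ γ') (hγ : γ' < γ) : ∃ x : M, ∀ r > 0, IsRich (closedBall x r) γ' := by
  by_contra! hpoor
  choose r hr hpoor using hpoor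
  obtain ⟨t, -, hcover⟩ :=
    isCompact_univ.elim_nhds_subcover (fun x => ball x (r x)) fun x _ => ball_mem_nhds x (hr x)
  obtain ⟨x, -, hx⟩ := h.exists_isRich_of_subset_biUnion hγ' hγ hcover
  exact hpoor x (hx.mono ball_subset_closedBall)

end Rich

theorem exists_tower_level {x : M} {ρ β a b : ℝ} (hρ : ρ ≤ 2⁻¹) (hβa : β ≤ a) (hab : a < b)
    (hb : 0 < b) (hx : IsRich (closedBall x ρ) b) :
    ∃ c : ℝ, ∃ G : Finset M, 0 < c ∧ c ≤ 2 * ρ ∧ ↑G ⊆ closedBall x ρ ∧ IsSep c G ∧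
      exp (c ^ (-β)) ≤ G.card ∧ (G.card : ℝ) ≤ exp (c ^ (-β)) + 1 ∧
      ∀ δ, 2 * c < δ → ∀ s : Finset M, ↑s ⊆ closedBall x ρ → IsSep δ s →
        (s.card : ℝ) < exp (δ ^ (-a)) + 1 := by
  -- the `+ 1` leaves room for a subset of exactly `⌈exp (c ^ (-β))⌉₊` points
  set D := {δ : ℝ | 0 < δ ∧ ∃ s : Finset M, ↑s ⊆ closedBall x ρ ∧ IsSep δ s ∧
    exp (δ ^ (-a)) + 1 ≤ s.card}
  have hD_le : ∀ δ ∈ D, δ ≤ 2 * ρ := by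
    rintro δ ⟨-, s, hs, hsep, hcard⟩
    by_contra! hδ
    have hle : (s.card : ℝ) ≤ 1 := by
      exact_mod_cast hsep.card_le_one fun y hy z hz => by
        linarith [dist_triangle_right y z x, mem_closedBall.1 (hs hy), mem_closedBall.1 (hs hz)]
    linarith [exp_pos (δ ^ (-a))]
  have hD_ne : D.Nonempty := by
    obtain ⟨δ, ⟨s, hs, hsep, hcard⟩, hlt, hδ⟩ := (hx.and_eventually
      ((eventually_add_neg_log_add_mul_rpow_lt hab hb (log 2) 1).and
        (Ioo_mem_nhdsGT one_pos))).exists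
    refine ⟨δ, hδ.1, s, hs, hsep, le_trans ?_ hcard⟩
    calc exp (δ ^ (-a)) + 1 ≤ 2 * exp (δ ^ (-a)) := by
          linarith [one_le_exp (rpow_pos_of_pos hδ.1 (-a)).le]
      _ = exp (log 2 + δ ^ (-a)) := by rw [exp_add, exp_log two_pos]
      _ ≤ exp (δ ^ (-b)) := exp_le_exp.2 (by linarith [neg_pos.2 (log_neg hδ.1 hδ.2)])
  obtain ⟨c, hcD, hmax⟩ := exists_mem_forall_lt_two_mul hD_ne ⟨2 * ρ, hD_le⟩ fun δ hδ => hδ.1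
  have hc2 := hD_le c hcD
  obtain ⟨hc, s, hs, hsep, hcard⟩ := hcD
  have hslack : exp (c ^ (-β)) + 1 ≤ s.card := by
    have : c ^ (-β) ≤ c ^ (-a) := rpow_le_rpow_of_exponent_ge hc (by linarith) (neg_le_neg hβa)
    linarith [exp_le_exp.2 this]
  obtain ⟨G, hGs, hGcard⟩ := s.exists_subset_card_eq (n := ⌈exp (c ^ (-β))⌉₊) (by
    exact_mod_cast ((Nat.ceil_lt_add_one (exp_pos _).le).trans_le hslack).le)
  refine ⟨c, G, hc, hc2, (Finset.coe_subset.2 hGs).trans hs, hsep.subset hGs,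
    hGcard ▸ Nat.le_ceil _, hGcard ▸ (Nat.ceil_lt_add_one (exp_pos _).le).le,
    fun δ hδ s hs hsep => lt_of_not_ge fun hge => ?_⟩
  exact (hmax δ ⟨by linarith, s, hs, hsep, hge⟩).not_gt hδ

structure Tower (x : M) (β : ℝ) (η : ℕ → ℝ) where
  r : ℕ → ℝ
  c : ℕ → ℝ
  G : ℕ → Finset M
  r_zero_le : r 0 ≤ 4⁻¹
  r_succ : ∀ n, r (n + 1) = c n / 4
  c_pos : ∀ n, 0 < c n
  c_le : ∀ n, c n ≤ 2 * r n
  G_subset : ∀ n, ↑(G n) ⊆ closedBall x (r n)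
  isSep_G : ∀ n, IsSep (c n) (G n)
  exp_le_card_G : ∀ n, exp (c n ^ (-β)) ≤ (G n).card
  card_G_le : ∀ n, ((G n).card : ℝ) ≤ exp (c n ^ (-β)) + 1
  card_lt : ∀ n δ, 2 * c n < δ → ∀ s : Finset M, ↑s ⊆ closedBall x (r n) → IsSep δ s →
    (s.card : ℝ) < exp (δ ^ (-(β + η n))) + 1

namespace Tower

variable {x : M} {β : ℝ} {η : ℕ → ℝ} (T : Tower x β η)

theorem r_le (n : ℕ) : T.r n ≤ 4⁻¹ * 2⁻¹ ^ n := by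
  induction n with
  | zero => simpa using T.r_zero_le
  | succ n ih => rw [T.r_succ, pow_succ]; linarith [T.c_le n]

theorem r_antitone : Antitone T.r :=
  antitone_nat_of_succ_le fun n => by rw [T.r_succ]; linarith [T.c_le n, T.c_pos n]

theorem c_antitone : Antitone T.c :=
  antitone_nat_of_succ_le fun n => by linarith [T.c_le (n + 1), T.r_succ n, T.c_pos n]

theorem two_mul_c_le (n : ℕ) : 2 * T.c n ≤ 2⁻¹ ^ n := by
  linarith [T.c_le n, T.r_le n]

theorem two_mul_c_le_one (n : ℕ) : 2 * T.c n ≤ 1 :=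
  (T.two_mul_c_le n).trans (pow_le_one₀ (by norm_num) (by norm_num))

theorem tendsto_c : Tendsto T.c atTop (𝓝[>] 0) := by
  refine tendsto_nhdsWithin_iff.2 ⟨squeeze_zero (fun n => (T.c_pos n).le) (fun n => ?_)
    (tendsto_pow_atTop_nhds_zero_of_lt_one (by norm_num) (by norm_num : (2⁻¹ : ℝ) < 1)),
    Eventually.of_forall T.c_pos⟩
  linarith [T.two_mul_c_le n, T.c_pos n]

theorem isRich_iUnion : IsRich (⋃ n, (T.G n : Set M)) β :=
  T.tendsto_c.frequently <| Frequently.of_forall fun n =>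
    ⟨T.G n, subset_iUnion (fun n => (T.G n : Set M)) n, T.isSep_G n, T.exp_le_card_G n⟩

theorem add_two_mul_le {n : ℕ} {ε : ℝ} (h : ε ≤ 2 * T.c n) : ((n : ℝ) + 2) * ε ≤ 2 := by
  have h2n : ((n : ℝ) + 2) ≤ 2 * 2 ^ n := by
    exact_mod_cast (by have := n.lt_two_pow_self; omega : n + 2 ≤ 2 * 2 ^ n)
  calc ((n : ℝ) + 2) * ε ≤ (n + 2) * 2⁻¹ ^ n := by gcongr; linarith [T.two_mul_c_le n]
    _ ≤ 2 * 2 ^ n * 2⁻¹ ^ n := by gcongr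
    _ = 2 := by rw [mul_assoc, ← mul_pow]; norm_num

theorem card_G_le_of_le (hβ : 0 ≤ β) {m n : ℕ} {ε a : ℝ} (hmn : m ≤ n) (hε : 0 < ε)
    (h : ε ≤ 2 * T.c n) (ha : β ≤ a) : ((T.G m).card : ℝ) ≤ exp ((ε / 2) ^ (-a)) + 1 := by
  refine (T.card_G_le m).trans (add_le_add_left (exp_le_exp.2 ?_) 1)
  exact rpow_neg_le_rpow_neg (half_pos hε) (by linarith [T.c_antitone hmn])
    (by linarith [T.two_mul_c_le_one n]) hβ ha

theorem card_le (hβ : 0 ≤ β) (hη : ∀ n, 0 ≤ η n) {n : ℕ} {ε : ℝ} (h₁ : 2 * T.c (n + 1) < ε)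
    (h₂ : ε ≤ 2 * T.c n) {s : Finset M} (hs : ↑s ⊆ ⋃ m, (T.G m : Set M)) (hsep : IsSep ε s) :
    (s.card : ℝ) ≤ 4 / ε * exp ((ε / 2) ^ (-(β + η (n + 1)))) := by
  classical
  set B := closedBall x (T.r (n + 1))
  set E := exp ((ε / 2) ^ (-(β + η (n + 1))))
  have hε : 0 < ε := by linarith [T.c_pos (n + 1)]
  have hβη : β ≤ β + η (n + 1) := le_add_of_nonneg_right (hη (n + 1))
  have hfar : ((s.filter (· ∉ B)).card : ℝ) ≤ (n + 1) * (E + 1) := by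
    have hsub : s.filter (· ∉ B) ⊆ (Finset.range (n + 1)).biUnion T.G := by
      intro z hz
      obtain ⟨hzs, hzB⟩ := Finset.mem_filter.1 hz
      obtain ⟨m, hm⟩ := mem_iUnion.1 (hs hzs)
      refine Finset.mem_biUnion.2 ⟨m, Finset.mem_range.2 (lt_of_not_ge fun hnm => hzB ?_), hm⟩
      exact closedBall_subset_closedBall (T.r_antitone hnm) (T.G_subset m hm)
    calc ((s.filter (· ∉ B)).card : ℝ) ≤ ∑ m ∈ Finset.range (n + 1), ((T.G m).card : ℝ) := by
          exact_mod_cast (Finset.card_le_card hsub).trans Finset.card_biUnion_le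
      _ ≤ ∑ _m ∈ Finset.range (n + 1), (E + 1) := Finset.sum_le_sum fun m hm =>
          T.card_G_le_of_le hβ (Nat.lt_succ_iff.1 (Finset.mem_range.1 hm)) hε h₂ hβη
      _ = (n + 1) * (E + 1) := by simp [mul_add]
  have hnear : ((s.filter (· ∈ B)).card : ℝ) ≤ E + 1 := by
    refine (T.card_lt (n + 1) ε h₁ _ (fun z hz => (Finset.mem_filter.1 hz).2)
      (hsep.subset (Finset.filter_subset _ s))).le.trans (add_le_add_left (exp_le_exp.2 ?_) 1)
    exact rpow_neg_le_rpow_neg (half_pos hε) (half_le_self hε.le)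
      (by linarith [T.two_mul_c_le_one n]) (hβ.trans hβη) le_rfl
  have hE : 1 ≤ E := one_le_exp (rpow_pos_of_pos (half_pos hε) _).le
  calc (s.card : ℝ) = (s.filter (· ∈ B)).card + (s.filter (· ∉ B)).card := by
        exact_mod_cast (Finset.card_filter_add_card_filter_not (· ∈ B)).symm
    _ ≤ (n + 2) * (E + 1) := by linarith
    _ ≤ ((n : ℝ) + 2) * (2 * E) := by gcongr; linarith
    _ = 2 * (((n : ℝ) + 2) * ε) / ε * E := by field_simp
    _ ≤ 4 / ε * E := by gcongr; linarith [T.add_two_mul_le h₂]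

theorem not_isRich_iUnion (hβ : 0 ≤ β) (hη0 : ∀ n, 0 ≤ η n) (hη : Tendsto η atTop (𝓝 0))
    {b : ℝ} (hb : β < b) : ¬IsRich (⋃ n, (T.G n : Set M)) b := by
  obtain ⟨a, hβa, hab⟩ := exists_between hb
  obtain ⟨N, hN⟩ := eventually_atTop.1 (hη.eventually (gt_mem_nhds (sub_pos.2 hβa)))
  have hu : Tendsto (fun n => 2 * T.c n) atTop (𝓝 0) := by
    simpa using (tendsto_nhds_of_tendsto_nhdsWithin T.tendsto_c).const_mul 2
  rw [IsRich, not_frequently]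
  filter_upwards [eventually_add_neg_log_add_mul_rpow_lt hab (by linarith)
    (log 4) (2 ^ a), Ioc_mem_nhdsGT (by linarith [T.c_pos N] : 0 < 2 * T.c N),
    (Ioo_mem_nhdsGT one_pos)] with ε hlt hεN hε
  rintro ⟨s, hs, hsep, hcard⟩
  obtain ⟨n, hNn, h₁, h₂⟩ := exists_le_succ_lt_le hu hε.1 hεN.2
  have hpow : (ε / 2) ^ (-(β + η (n + 1))) ≤ 2 ^ a * ε ^ (-a) := calc
    _ ≤ (ε / 2) ^ (-a) := rpow_le_rpow_of_exponent_ge (half_pos hε.1) (by linarith [hε.2])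
          (by linarith [hN (n + 1) (by omega)])
    _ = 2 ^ a * ε ^ (-a) := by
          rw [div_rpow hε.1.le zero_le_two, rpow_neg zero_le_two a, div_inv_eq_mul, mul_comm]
  have := calc exp (ε ^ (-b)) ≤ s.card := hcard
    _ ≤ 4 / ε * exp ((ε / 2) ^ (-(β + η (n + 1)))) := T.card_le hβ hη0 h₁ h₂ hs hsep
    _ = exp (log 4 + -log ε + (ε / 2) ^ (-(β + η (n + 1)))) := by
          rw [exp_add, exp_add, exp_log four_pos, exp_neg, exp_log hε.1, div_eq_mul_inv]
    _ ≤ exp (log 4 + -log ε + 2 ^ a * ε ^ (-a)) := by gcongr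
    _ < exp (ε ^ (-b)) := exp_lt_exp.2 hlt
  exact lt_irrefl _ this

end Tower

theorem exists_tower {x : M} {β b : ℝ} {η : ℕ → ℝ} (hη0 : ∀ n, 0 ≤ η n)
    (hηb : ∀ n, β + η n < b) (hb : 0 < b) (hx : ∀ ρ > 0, IsRich (closedBall x ρ) b) :
    Nonempty (Tower x β η) := by
  choose! c G hc using fun n ρ (hρ : 0 < ρ) (hρ' : ρ ≤ 4⁻¹) =>
    exists_tower_level (x := x) (by linarith) (le_add_of_nonneg_right (hη0 n)) (hηb n) hb (hx ρ hρ)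
  let r : ℕ → ℝ := fun n => Nat.rec 4⁻¹ (fun n ρ => c n ρ / 4) n
  have hr : ∀ n, 0 < r n ∧ r n ≤ 4⁻¹ := by
    intro n
    induction n with
    | zero => norm_num [r]
    | succ n ih =>
      obtain ⟨hc0, hc2, -⟩ := hc n (r n) ih.1 ih.2
      exact ⟨div_pos hc0 four_pos, by linarith [show r (n + 1) = c n (r n) / 4 from rfl]⟩
  have hlevel := fun n => hc n (r n) (hr n).1 (hr n).2
  exact ⟨{
    r := r
    c := fun n => c n (r n)
    G := fun n => G n (r n)
    r_zero_le := le_rfl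
    r_succ := fun n => rfl
    c_pos := fun n => (hlevel n).1
    c_le := fun n => (hlevel n).2.1
    G_subset := fun n => (hlevel n).2.2.1
    isSep_G := fun n => (hlevel n).2.2.2.1
    exp_le_card_G := fun n => (hlevel n).2.2.2.2.1
    card_G_le := fun n => (hlevel n).2.2.2.2.2.1
    card_lt := fun n => (hlevel n).2.2.2.2.2.2 }⟩

theorem exists_upperMetricOrder_eq_of_lt [CompactSpace M] {β : ℝ} (hβ : 0 ≤ β)
    (h : (β : EReal) < upperMetricOrder (univ : Set M)) :
    ∃ Y : Set M, upperMetricOrder Y = β := by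
  obtain ⟨b, hβb, hb⟩ := EReal.exists_between_coe_real h
  obtain ⟨b', hβb', hb'b⟩ := exists_between (EReal.coe_lt_coe_iff.1 hβb)
  obtain ⟨x, hx⟩ := exists_forall_isRich_closedBall
    (isRich_of_lt_upperMetricOrder (by linarith) hb) (by linarith) hb'b
  set η : ℕ → ℝ := fun n => (b' - β) / (n + 2)
  have hη0 : ∀ n, 0 ≤ η n := fun n => div_nonneg (by linarith) (by positivity)
  have hη : Tendsto η atTop (𝓝 0) := by
    have := (tendsto_const_div_atTop_nhds_zero_nat (b' - β)).comp (tendsto_add_atTop_nat 2)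
    simpa [η, Function.comp_def] using this
  have hηb' : ∀ n, β + η n < b' := fun n => by
    have : η n < b' - β := div_lt_self (by linarith) (by linarith [n.cast_nonneg (α := ℝ)])
    linarith
  obtain ⟨T⟩ := exists_tower hη0 hηb' (by linarith) hx
  refine ⟨⋃ n, (T.G n : Set M), le_antisymm ?_ ?_⟩
  · exact upperMetricOrder_le_of_not_isRich hβ fun b hb => T.not_isRich_iUnion hβ hη0 hη hb
  · exact T.isRich_iUnion.le_upperMetricOrder (isCompact_univ.totallyBounded.subset (subset_univ _))

end UpperMetricOrder

/-- the upper metric order has the intermediate value property on subsets of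
a compact metric space: for every `β ∈ [0,∞]` with `β ≤ mo⁺(Z)` there is `Y ⊆ Z` with
`mo⁺(Y) = β`. -/
theorem upperMetricOrder_intermediateValue
    {Z : Type*} [MetricSpace Z] [CompactSpace Z]
    (β : EReal) (hβ0 : 0 ≤ β) (hβ : β ≤ upperMetricOrder (Set.univ : Set Z)) :
    ∃ Y : Set Z, upperMetricOrder Y = β := by
  rcases hβ.eq_or_lt with rfl | hlt
  · exact ⟨univ, rfl⟩
  lift β to ℝ using ⟨hlt.ne_top, (EReal.bot_lt_zero.trans_le hβ0).ne'⟩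
  exact UpperMetricOrder.exists_upperMetricOrder_eq_of_lt (EReal.coe_nonneg.1 hβ0) hlt
end
end

section
/- Let (Z,d) be a nonempty compact metric space, λ ∈ (0, 1/2) and k ∈ ℕ. Then there exists a finite partition of Z into nonempty Borel sets, each of diameter at most 2λ^k, and each containing an open ball of Z of radius λ^{k+1}. -/
open Metric Set Function
open scoped NNReal

/-!
Take a maximal `λ^k`-separated set of centres; by compactness it is finite, and by maximality the
closed balls of radius `λ^k` around the centres cover `Z`. Since `2 λ^(k+1) ≤ λ^k`, the open balls
of radius `λ^(k+1)` around the centres are pairwise disjoint. Each cell is such a small ball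
together with the part of its big ball that lies outside all small balls and outside the big balls
of earlier centres.
-/

section FillDisjoint

variable {α ι : Type*} [LinearOrder ι] [LocallyFiniteOrderBot ι]

def fillDisjoint (B V : ι → Set α) (i : ι) : Set α :=
  B i ∪ disjointed (fun j ↦ V j \ ⋃ k, B k) i

variable (B V : ι → Set α)

theorem subset_fillDisjoint (i : ι) : B i ⊆ fillDisjoint B V i :=
  subset_union_left

variable {B V}

theorem fillDisjoint_subset (hBV : ∀ i, B i ⊆ V i) (i : ι) : fillDisjoint B V i ⊆ V i :=
  union_subset (hBV i) ((disjointed_subset _ i).trans sdiff_subset)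

theorem pairwise_disjoint_fillDisjoint (hB : Pairwise (Disjoint on B)) :
    Pairwise (Disjoint on fillDisjoint B V) := by
  intro i j hij
  have hrest : ∀ i j, Disjoint (B i) (disjointed (fun j ↦ V j \ ⋃ k, B k) j) := fun i j ↦
    disjoint_left.2 fun x hx hx' ↦ (disjointed_subset _ j hx').2 (mem_iUnion_of_mem i hx)
  simp only [onFun, fillDisjoint, disjoint_union_left, disjoint_union_right]
  exact ⟨⟨hB hij, (hrest j i).symm⟩, hrest i j, disjoint_disjointed _ hij⟩

theorem iUnion_fillDisjoint (hBV : ∀ i, B i ⊆ V i) :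
    ⋃ i, fillDisjoint B V i = ⋃ i, V i := by
  simp only [fillDisjoint, iUnion_union_distrib, iUnion_disjointed, ← iUnion_sdiff,
    union_sdiff_self]
  exact union_eq_right.2 (iUnion_mono hBV)

theorem MeasurableSet.fillDisjoint [MeasurableSpace α] [Countable ι]
    (hB : ∀ i, MeasurableSet (B i)) (hV : ∀ i, MeasurableSet (V i)) (i : ι) :
    MeasurableSet (fillDisjoint B V i) := by
  refine (hB i).union ?_
  rw [disjointed_eq_inter_compl]
  have hVB : ∀ j, MeasurableSet (V j \ ⋃ k, B k) := fun j ↦ (hV j).diff (.iUnion hB)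
  exact (hVB i).inter (.iInter fun j ↦ .iInter fun _ ↦ (hVB j).compl)

end FillDisjoint

namespace Metric

theorem exists_finite_isSeparated_isCover {X : Type*} [PseudoEMetricSpace X] {s : Set X}
    (hs : IsCompact s) {ε : ℝ≥0} (hε : ε ≠ 0) :
    ∃ N ⊆ s, N.Finite ∧ IsSeparated ε N ∧ IsCover ε s N := by
  -- an `ε`-separated set meets each ball of a finite `ε / 2`-cover at most once
  have hpack : packingNumber ε s ≠ ⊤ := by
    obtain ⟨C, -, hCfin, hC⟩ :=
      exists_finite_isCover_of_isCompact (ε := ε / 2) (by simpa using hε) hs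
    refine ne_top_of_le_ne_top hCfin.encard_lt_top.ne
      (le_trans ?_ hC.externalCoveringNumber_le_encard)
    simpa [mul_div_cancel₀] using packingNumber_two_mul_le_externalCoveringNumber (ε / 2) s
  refine ⟨maximalSeparatedSet ε s, maximalSeparatedSet_subset, ?_,
    isSeparated_maximalSeparatedSet, isCover_maximalSeparatedSet hpack⟩
  exact encard_ne_top_iff.1 (encard_maximalSeparatedSet hpack ▸ hpack)

theorem IsSeparated.pairwiseDisjoint_ball {X : Type*} [PseudoMetricSpace X] {ε : ℝ≥0}
    {N : Set X} (hN : IsSeparated ε N) {δ : ℝ} (hδ : 2 * δ ≤ ε) :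
    N.PairwiseDisjoint (ball · δ) := by
  intro x hx y hy hxy
  have : (ε : ℝ) < dist x y := by
    simpa [edist_dist, ENNReal.coe_lt_ofReal] using hN hx hy hxy
  exact ball_disjoint_ball (by linarith)

theorem exists_partition_ball_subset_subset_closedBall {X : Type*} [PseudoMetricSpace X]
    [CompactSpace X] [MeasurableSpace X] [OpensMeasurableSpace X] {r t : ℝ} (hr : 0 < r)
    (htr : 2 * t ≤ r) :
    ∃ (n : ℕ) (c : Fin n → X) (E : Fin n → Set X), Pairwise (Disjoint on E) ∧
      ⋃ i, E i = univ ∧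
      ∀ i, MeasurableSet (E i) ∧ ball (c i) t ⊆ E i ∧ E i ⊆ closedBall (c i) r := by
  lift r to ℝ≥0 using hr.le
  obtain ⟨N, -, hNfin, hNsep, hNcov⟩ :=
    exists_finite_isSeparated_isCover (isCompact_univ (X := X)) (NNReal.coe_pos.1 hr).ne'
  obtain ⟨n, c, rfl⟩ := hNfin.fin_embedding
  have hBV : ∀ i, ball (c i) t ⊆ closedBall (c i) r := fun i ↦
    ball_subset_closedBall.trans (closedBall_subset_closedBall (by linarith))
  have hB : Pairwise (Disjoint on fun i ↦ ball (c i) t) := fun i j hij ↦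
    hNsep.pairwiseDisjoint_ball htr (mem_range_self i) (mem_range_self j) (c.injective.ne hij)
  refine ⟨n, c, fillDisjoint _ _, pairwise_disjoint_fillDisjoint hB, ?_, fun i ↦
    ⟨.fillDisjoint (fun _ ↦ measurableSet_ball) (fun _ ↦ measurableSet_closedBall) i,
      subset_fillDisjoint (fun i ↦ ball (c i) t) _ i, fillDisjoint_subset hBV i⟩⟩
  rw [iUnion_fillDisjoint hBV]
  simpa [eq_univ_iff_forall] using fun x ↦ hNcov.subset_iUnion_closedBall (mem_univ x)

end Metric

theorem exists_finite_partition_diam_le_containing_balls_general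
    {Z : Type*} [MetricSpace Z] [CompactSpace Z]
    [MeasurableSpace Z] [BorelSpace Z]
    (lam : ℝ) (hlam : lam ∈ Set.Ioo (0:ℝ) (1/2)) (k : ℕ) :
    ∃ P : Finset (Set Z),
      (∀ E ∈ P, E.Nonempty ∧ MeasurableSet E ∧ Metric.diam E ≤ 2 * lam ^ k ∧
        ∃ c : Z, Metric.ball c (lam ^ (k + 1)) ⊆ E) ∧
      (∀ E ∈ P, ∀ E' ∈ P, E ≠ E' → Disjoint E E') ∧
      ⋃₀ (P : Set (Set Z)) = Set.univ := by
  obtain ⟨hlam0, hlam⟩ := hlam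
  have hr : 0 < lam ^ k := pow_pos hlam0 k
  have htr : 2 * lam ^ (k + 1) ≤ lam ^ k := by rw [pow_succ]; nlinarith
  obtain ⟨n, c, E, hdisj, hcov, hE⟩ :=
    exists_partition_ball_subset_subset_closedBall (X := Z) hr htr
  refine ⟨Finset.univ.image E, ?_, ?_, by simp [hcov]⟩
  · simp only [Finset.mem_image, Finset.mem_univ, true_and, forall_exists_index,
      forall_apply_eq_imp_iff]
    intro i
    obtain ⟨hmeas, hball, hsub⟩ := hE i
    exact ⟨⟨c i, hball (mem_ball_self (pow_pos hlam0 _))⟩, hmeas,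
      (diam_mono hsub isBounded_closedBall).trans (diam_closedBall hr.le), c i, hball⟩
  · simp only [Finset.mem_image, Finset.mem_univ, true_and, forall_exists_index,
      forall_apply_eq_imp_iff]
    exact fun i j hij ↦ hdisj fun h ↦ hij (congrArg E h)

/-- in a nonempty compact metric space, for any `λ ∈ (0, 1/2)` and `k ∈ ℕ`
there is a finite partition into nonempty Borel sets, each of diameter at most `2 λ^k` and
each containing an open ball of radius `λ^(k+1)`. -/
theorem exists_finite_partition_diam_le_containing_balls
    {Z : Type*} [MetricSpace Z] [CompactSpace Z] [Nonempty Z]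
    [MeasurableSpace Z] [BorelSpace Z]
    (lam : ℝ) (hlam : lam ∈ Set.Ioo (0:ℝ) (1/2)) (k : ℕ) :
    ∃ P : Finset (Set Z),
      (∀ E ∈ P, E.Nonempty ∧ MeasurableSet E ∧ Metric.diam E ≤ 2 * lam ^ k ∧
        ∃ c : Z, Metric.ball c (lam ^ (k + 1)) ⊆ E) ∧
      (∀ E ∈ P, ∀ E' ∈ P, E ≠ E' → Disjoint E E') ∧
      ⋃₀ (P : Set (Set Z)) = Set.univ :=
  exists_finite_partition_diam_le_containing_balls_general lam hlam k
end
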